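/- Let X be a CAT(0) cube complex. Then for all vertices v, v' ∈ X and every (x,y,z,w) ∈ 𝒜, one has cr_v(x,y,z,w) = cr_{v'}(x,y,z,w); moreover, for every cubical automorphism g of X and its induced action on X̄, one has cr_v(g(x),g(y),g(z),g(w)) = cr_v(x,y,z,w) for every (x,y,z,w) ∈ 𝒜. -/

import Mathlib

/-!
We use the standard combinatorial model of a CAT(0) cube complex: it is identified
with its vertex set endowed with the combinatorial (ℓ¹) metric, i.e. with a median
graph `G` on a vertex type `V`.  Halfspaces are realised as the vertex sets of the
two sides of the hyperplane dual to an edge, the Roller compactification `X̄` is the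
set of ultrafilters of halfspaces, vertices embedding via principal ultrafilters,
and the Roller boundary `∂X` consists of the non-principal ultrafilters.
-/

open scoped ENNReal
open Set

namespace CCCR

variable {V V' : Type*}

/-- The interval between two vertices w.r.t. the combinatorial metric. -/
def vInterval (G : SimpleGraph V) (u v : V) : Set V :=
  {w : V | G.dist u w + G.dist w v = G.dist u v}

/-- Combinatorial model of a CAT(0) cube complex (identified with its vertex set,
endowed with the combinatorial metric): a connected median graph. -/
def IsCCC (G : SimpleGraph V) : Prop :=
  G.Connected ∧ ∀ x y z : V, ∃! m : V,
    m ∈ vInterval G x y ∧ m ∈ vInterval G y z ∧ m ∈ vInterval G z x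

/-- Halfspaces of the cube complex: the sides of the hyperplane dual to an edge. -/
def IsHalfspace (G : SimpleGraph V) (h : Set V) : Prop :=
  ∃ u v : V, G.Adj u v ∧ h = {w : V | G.dist w v < G.dist w u}

/-- The halfspace dual to the (oriented) edge `(u,v)` containing `v`. -/
def edgeHalf (G : SimpleGraph V) (u v : V) : Set V :=
  {w : V | G.dist w v < G.dist w u}

/-- The hyperplane (wall) dual to the edge `(u,v)`, recorded as its pair of sides. -/
def wallOf (G : SimpleGraph V) (u v : V) : Set (Set V) :=
  {edgeHalf G u v, (edgeHalf G u v)ᶜ}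

/-- Two (necessarily distinct) hyperplanes, with respective sides `h` and `k`,
are transverse: all four quarter-spaces are nonempty. -/
def Transv (h k : Set V) : Prop :=
  (h ∩ k).Nonempty ∧ (h ∩ kᶜ).Nonempty ∧ (hᶜ ∩ k).Nonempty ∧ (hᶜ ∩ kᶜ).Nonempty

/-- An ultrafilter of halfspaces: a point of the Roller compactification X̄.
It contains exactly one side of each hyperplane, and any two members intersect. -/
def IsUltra (G : SimpleGraph V) (σ : Set (Set V)) : Prop :=
  (∀ h ∈ σ, IsHalfspace G h) ∧
  (∀ h : Set V, IsHalfspace G h → (h ∈ σ ↔ hᶜ ∉ σ)) ∧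
  (∀ h ∈ σ, ∀ k ∈ σ, (h ∩ k).Nonempty)

/-- The principal ultrafilter of a vertex, i.e. the image of `v` in X̄. -/
def princ (G : SimpleGraph V) (v : V) : Set (Set V) :=
  {h : Set V | IsHalfspace G h ∧ v ∈ h}

/-- A point of the Roller boundary ∂X = X̄ ∖ X: a non-principal ultrafilter. -/
def IsBdryPt (G : SimpleGraph V) (σ : Set (Set V)) : Prop :=
  IsUltra G σ ∧ ∀ v : V, σ ≠ princ G v

/-- The Roller boundary ∂X as a type. -/
abbrev Bdry (G : SimpleGraph V) : Type _ := {σ : Set (Set V) // IsBdryPt G σ}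

/-- The Gromov product (x·y)_v = #𝒲(v | x, y) ∈ ℕ ∪ {+∞}, counted through the
sides containing both x and y but not v. -/
noncomputable def grom (_G : SimpleGraph V) (v : V) (x y : Set (Set V)) : ℕ∞ :=
  {h : Set V | h ∈ x ∧ h ∈ y ∧ v ∉ h}.encard

/-- The embedding ℕ ∪ {+∞} → ℤ ∪ {±∞}. -/
noncomputable def toE (n : ℕ∞) : EReal := ((n : ℝ≥0∞) : EReal)

/-- The cross ratio cr_v(x,y,z,w) = (x·z)_v + (y·w)_v − (x·w)_v − (y·z)_v ∈ ℤ ∪ {±∞}. -/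
noncomputable def crv (G : SimpleGraph V) (v : V) (x y z w : Set (Set V)) : EReal :=
  toE (grom G v x z) + toE (grom G v y w) - toE (grom G v x w) - toE (grom G v y z)

/-- The triple of sums of Gromov products attached to a 4-tuple. -/
noncomputable def tripod (G : SimpleGraph V) (v : V) (x y z w : Set (Set V)) :
    ℕ∞ × ℕ∞ × ℕ∞ :=
  (grom G v x y + grom G v z w, grom G v x z + grom G v y w, grom G v x w + grom G v y z)

/-- (x,y,z,w) ∈ 𝒜 w.r.t. the basepoint v: at most one of the three sums is infinite. -/
def inA (G : SimpleGraph V) (v : V) (x y z w : Set (Set V)) : Prop :=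
  ((tripod G v x y z w).1 ≠ ⊤ ∧ (tripod G v x y z w).2.1 ≠ ⊤) ∨
  ((tripod G v x y z w).1 ≠ ⊤ ∧ (tripod G v x y z w).2.2 ≠ ⊤) ∨
  ((tripod G v x y z w).2.1 ≠ ⊤ ∧ (tripod G v x y z w).2.2 ≠ ⊤)

/-- (x,y,z,w) ∈ 𝒜 (this is independent of the basepoint). -/
def memA (G : SimpleGraph V) (x y z w : Set (Set V)) : Prop :=
  ∀ v : V, inA G v x y z w

/-- Two triples in (ℕ ∪ {+∞})³ are equivalent if they differ by adding a constant
n ∈ ℕ to all three entries. -/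
def TripEquiv (p q : ℕ∞ × ℕ∞ × ℕ∞) : Prop :=
  (∃ n : ℕ, p.1 = q.1 + (n : ℕ∞) ∧ p.2.1 = q.2.1 + (n : ℕ∞) ∧ p.2.2 = q.2.2 + (n : ℕ∞)) ∨
  (∃ n : ℕ, q.1 = p.1 + (n : ℕ∞) ∧ q.2.1 = p.2.1 + (n : ℕ∞) ∧ q.2.2 = p.2.2 + (n : ℕ∞))

/-- crt(x,y,z,w) = ⟪a:b:c⟫ (the cross ratio triple is independent of the basepoint,
so we require the equality of classes at every basepoint). -/
def crtEq (G : SimpleGraph V) (x y z w : Set (Set V)) (a b c : ℕ∞) : Prop :=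
  ∀ v : V, TripEquiv (tripod G v x y z w) (a, b, c)

/-- The median of three points of X̄. -/
def med (x y z : Set (Set V)) : Set (Set V) := (x ∩ y) ∪ (y ∩ z) ∪ (z ∩ x)

/-- The interval I(x,y) ⊆ X̄ between two points of X̄. -/
def rInterval (G : SimpleGraph V) (x y : Set (Set V)) : Set (Set (Set V)) :=
  {σ : Set (Set V) | IsUltra G σ ∧ x ∩ y ⊆ σ}

/-- `Op G x y z` : x and y are opposite with respect to z, i.e. the median
m = m(x,y,z) lies in X and I(x,y) = I(x,m) ∪ I(m,y). -/
def Op (G : SimpleGraph V) (x y z : Set (Set V)) : Prop :=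
  (∃ p : V, med x y z = princ G p) ∧
  rInterval G x y = rInterval G x (med x y z) ∪ rInterval G (med x y z) y

/-- A geodesic ray (based at `r 0`). -/
def IsGeodRay (G : SimpleGraph V) (r : ℕ → V) : Prop :=
  (∀ n : ℕ, G.Adj (r n) (r (n + 1))) ∧
  ∀ m n : ℕ, m ≤ n → G.dist (r m) (r n) = n - m

/-- A bi-infinite geodesic line. -/
def IsGeodLine (G : SimpleGraph V) (L : ℤ → V) : Prop :=
  (∀ n : ℤ, G.Adj (L n) (L (n + 1))) ∧
  ∀ m n : ℤ, m ≤ n → (G.dist (L m) (L n) : ℤ) = n - m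

/-- The set 𝒲(r) of hyperplanes crossed by (the edges of) a ray. -/
def rayWalls (G : SimpleGraph V) (r : ℕ → V) : Set (Set (Set V)) :=
  {W : Set (Set V) | ∃ n : ℕ, W = wallOf G (r n) (r (n + 1))}

/-- A hyperplane is adjacent to `v` if it is dual to an edge incident to `v`. -/
def WallAdjTo (G : SimpleGraph V) (v : V) (W : Set (Set V)) : Prop :=
  ∃ u : V, G.Adj v u ∧ W = wallOf G v u

/-- A straight ray: no two of the hyperplanes it crosses are transverse. -/
def RayStraight (G : SimpleGraph V) (r : ℕ → V) : Prop :=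
  ∀ m n : ℕ, ¬ Transv (edgeHalf G (r m) (r (m + 1))) (edgeHalf G (r n) (r (n + 1)))

/-- A straight line: no two of the hyperplanes it crosses are transverse. -/
def LineStraight (G : SimpleGraph V) (L : ℤ → V) : Prop :=
  ∀ m n : ℤ, ¬ Transv (edgeHalf G (L m) (L (m + 1))) (edgeHalf G (L n) (L (n + 1)))

/-- The endpoint at infinity r⁺ ∈ ∂X of a ray: the ultrafilter of those halfspaces
containing all but finitely many of its vertices. -/
def rayEnd (G : SimpleGraph V) (r : ℕ → V) : Set (Set V) :=
  {h : Set V | IsHalfspace G h ∧ ∃ N : ℕ, ∀ n : ℕ, N ≤ n → r n ∈ h}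

/-- A straight point of the Roller boundary: the endpoint at infinity of a straight ray. -/
def IsStraightPt (G : SimpleGraph V) (x : Set (Set V)) : Prop :=
  ∃ r : ℕ → V, IsGeodRay G r ∧ RayStraight G r ∧ rayEnd G r = x

/-- x and y are the two endpoints at infinity of the line L. -/
def LineEnds (G : SimpleGraph V) (L : ℤ → V) (x y : Set (Set V)) : Prop :=
  rayEnd G (fun n : ℕ => L (n : ℤ)) = x ∧ rayEnd G (fun n : ℕ => L (-(n : ℤ))) = y

/-- The edges from `v` to `a` and from `v` to `b` span a square. -/
def SpansSquare (G : SimpleGraph V) (v a b : V) : Prop :=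
  ∃ w : V, w ≠ v ∧ G.Adj a w ∧ G.Adj b w

/-- An extremal vertex: some edge at `v` spans a square with every other edge at `v`. -/
def Extremal (G : SimpleGraph V) (v : V) : Prop :=
  ∃ a : V, G.Adj v a ∧ ∀ b : V, G.Adj v b → b ≠ a → SpansSquare G v a b

/-- The cube complex has no extremal vertices. -/
def NoExtremal (G : SimpleGraph V) : Prop := ∀ v : V, ¬ Extremal G v

/-- A skinny vertex: exactly two incident edges. -/
def Skinny (G : SimpleGraph V) (v : V) : Prop := {u : V | G.Adj v u}.encard = 2

/-- A skinny ray: a geodesic ray whose initial vertex has at least three incident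
edges and all of whose other vertices are skinny. -/
def IsSkinnyRay (G : SimpleGraph V) (r : ℕ → V) : Prop :=
  IsGeodRay G r ∧ 3 ≤ {u : V | G.Adj (r 0) u}.encard ∧ ∀ n : ℕ, 1 ≤ n → Skinny G (r n)

/-- (The vertex set of) a cube of the complex: a subset inducing a hypercube graph. -/
def IsCube (G : SimpleGraph V) (c : Set V) : Prop :=
  ∃ (n : ℕ) (e : c ≃ (Fin n → Bool)),
    ∀ a b : c, G.Adj (a : V) (b : V) ↔ ∃! i : Fin n, e a i ≠ e b i

/-- A maximal cube. -/
def IsMaxCube (G : SimpleGraph V) (c : Set V) : Prop :=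
  IsCube G c ∧ ∀ c' : Set V, IsCube G c' → c ⊆ c' → c' = c

/-- Completeness: there is no infinite ascending chain of cubes. -/
def CubeComplete (G : SimpleGraph V) : Prop :=
  ¬ ∃ c : ℕ → Set V, (∀ n : ℕ, IsCube G (c n)) ∧ ∀ n : ℕ, c n ⊂ c (n + 1)

/-- No free faces: no non-maximal cube is contained in a unique maximal cube. -/
def NoFreeFaces (G : SimpleGraph V) : Prop :=
  ∀ c : Set V, IsCube G c → ¬ IsMaxCube G c → ¬ ∃! m : Set V, IsMaxCube G m ∧ c ⊆ m

/-- #𝒲(x, z | y, w): the number of hyperplanes separating x and z from y and w,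
counted through the sides containing x and z. -/
noncomputable def sepCount (x z y w : Set (Set V)) : ℕ∞ :=
  {h : Set V | h ∈ x ∧ h ∈ z ∧ h ∉ y ∧ h ∉ w}.encard

/-- A Möbius map between Roller boundaries: it maps 𝒜(X) into 𝒜(Y) and preserves
cross ratios. -/
def Mobius (G : SimpleGraph V) (G' : SimpleGraph V') (f : Bdry G → Bdry G') : Prop :=
  ∀ x y z w : Bdry G, memA G x.1 y.1 z.1 w.1 →
    memA G' (f x).1 (f y).1 (f z).1 (f w).1 ∧
    ∀ (v : V) (v' : V'),
      crv G' v' (f x).1 (f y).1 (f z).1 (f w).1 = crv G v x.1 y.1 z.1 w.1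

/-- The induced action of a cubical isomorphism on X̄: an ultrafilter is mapped to
the set of images of its halfspaces. -/
def mapUltra (φ : V → V') (σ : Set (Set V)) : Set (Set V') :=
  (fun h : Set V => φ '' h) '' σ

/-- The standard cubulation of ℝ: vertex set ℤ, edges between consecutive integers. -/
def zline : SimpleGraph ℤ := SimpleGraph.fromRel (fun m n => n = m + 1)

end CCCR

/-!
Fix a basepoint `v` and sort the halfspaces `h ∌ v` by which of `x, y, z, w` contain them.
Then `(x·z)_v + (y·w)_v` counts the halfspaces `h ∌ v` containing exactly `x, z` or exactly
`y, w`, plus a term `q_v` symmetric in `x, y, z, w` (those in at least three of the four,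
those in all four once more). Passing to complements, the halfspaces containing exactly
`y, w` and avoiding `v` correspond to those containing exactly `x, z` and `v`, so
`(x·z)_v + (y·w)_v = #𝒲(x, z | y, w) + q_v`. On `𝒜` the term `q_v` is finite and cancels:
`cr_v(x, y, z, w) = #𝒲(x, z | y, w) − #𝒲(x, w | y, z)`, which does not involve `v`.
An automorphism `g` moves Gromov products from the basepoint `v` to `g⁻¹ v`.
-/

namespace CCCR

section Combinatorics

variable {α : Type*}

noncomputable def overlapCount (a b c d : Set α) : ℕ∞ :=
  (a ∩ b ∩ c ∪ a ∩ b ∩ d ∪ a ∩ c ∩ d ∪ b ∩ c ∩ d).encard + (a ∩ b ∩ c ∩ d).encard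

lemma overlapCount_swap (a b c d : Set α) : overlapCount a b c d = overlapCount a b d c := by
  unfold overlapCount
  congr 2 <;> ext <;> simp only [mem_union, mem_inter_iff] <;> tauto

lemma encard_inter_add_encard_inter (a b c d : Set α) :
    (a ∩ c).encard + (b ∩ d).encard =
      ((a ∩ c) \ (b ∪ d)).encard + ((b ∩ d) \ (a ∪ c)).encard + overlapCount a b c d := by
  have hunion : a ∩ c ∪ b ∩ d = ((a ∩ c) \ (b ∪ d) ∪ (b ∩ d) \ (a ∪ c)) ∪
      (a ∩ b ∩ c ∪ a ∩ b ∩ d ∪ a ∩ c ∩ d ∪ b ∩ c ∩ d) := by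
    ext; simp only [mem_union, mem_inter_iff, mem_sdiff]; tauto
  have hinter : a ∩ c ∩ (b ∩ d) = a ∩ b ∩ c ∩ d := by
    ext; simp only [mem_inter_iff]; tauto
  rw [← encard_union_add_encard_inter, hunion, hinter, overlapCount, ← add_assoc,
    encard_union_eq, encard_union_eq]
  all_goals rw [disjoint_left]; intro; simp only [mem_union, mem_inter_iff, mem_sdiff]; tauto

end Combinatorics

variable {V : Type*} {G : SimpleGraph V}

lemma IsUltra.compl_mem_iff {x : Set (Set V)} (hx : IsUltra G x) {h : Set V}
    (hh : IsHalfspace G h) : hᶜ ∈ x ↔ h ∉ x := by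
  have := hx.2.1 h hh; tauto

lemma compl_mem_sep {x y z w : Set (Set V)} (hx : IsUltra G x) (hy : IsUltra G y)
    (hz : IsUltra G z) (hw : IsUltra G w) {h : Set V} (hsep : h ∈ (x ∩ z) \ (y ∪ w)) :
    hᶜ ∈ (y ∩ w) \ (x ∪ z) := by
  obtain ⟨⟨hhx, hhz⟩, hhyw⟩ := hsep
  have hh := hx.1 h hhx
  simp only [mem_union, not_or] at hhyw
  simp only [mem_inter_iff, mem_sdiff, mem_union, not_or, hy.compl_mem_iff hh,
    hw.compl_mem_iff hh, hx.compl_mem_iff hh, hz.compl_mem_iff hh]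
  tauto

lemma encard_sep_containing_eq_encard_sep_avoiding {x y z w : Set (Set V)} (hx : IsUltra G x)
    (hy : IsUltra G y) (hz : IsUltra G z) (hw : IsUltra G w) (v : V) :
    (((x ∩ z) \ (y ∪ w)) ∩ {h | v ∈ h}).encard = (((y ∩ w) \ (x ∪ z)) \ {h | v ∈ h}).encard := by
  rw [← compl_injective.encard_image]
  congr 1
  ext h
  constructor
  · rintro ⟨k, ⟨hk, hv⟩, rfl⟩
    exact ⟨compl_mem_sep hx hy hz hw hk, fun hvk => hvk hv⟩
  · rintro ⟨hk, hv⟩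
    exact ⟨hᶜ, ⟨compl_mem_sep hy hx hw hz hk, hv⟩, compl_compl h⟩

lemma grom_eq_encard (v : V) (x y : Set (Set V)) :
    grom G v x y = ((x \ {h | v ∈ h}) ∩ (y \ {h | v ∈ h})).encard := by
  rw [grom]; congr 1; ext; simp only [mem_ofPred_eq, mem_inter_iff, mem_sdiff]; tauto

lemma grom_add_grom_eq_sepCount_add {x y z w : Set (Set V)} (hx : IsUltra G x) (hy : IsUltra G y)
    (hz : IsUltra G z) (hw : IsUltra G w) (v : V) :
    grom G v x z + grom G v y w = sepCount x z y w +
      overlapCount (x \ {h | v ∈ h}) (y \ {h | v ∈ h}) (z \ {h | v ∈ h}) (w \ {h | v ∈ h}) := by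
  have hdiff : ∀ a b c d : Set (Set V), ((a \ {h | v ∈ h}) ∩ (c \ {h | v ∈ h})) \
      ((b \ {h | v ∈ h}) ∪ (d \ {h | v ∈ h})) = ((a ∩ c) \ (b ∪ d)) \ {h | v ∈ h} := by
    intros; ext; simp only [mem_inter_iff, mem_sdiff, mem_union]; tauto
  have hsep : sepCount x z y w = ((x ∩ z) \ (y ∪ w)).encard := by
    rw [sepCount]; congr 1; ext; simp only [mem_ofPred_eq, mem_sdiff, mem_inter_iff, mem_union]
    tauto
  rw [grom_eq_encard, grom_eq_encard, encard_inter_add_encard_inter, hdiff, hdiff,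
    ← encard_sep_containing_eq_encard_sep_avoiding hx hy hz hw, encard_sdiff_add_encard_inter, hsep]

lemma toE_ne_bot (n : ℕ∞) : toE n ≠ ⊥ := EReal.coe_ennreal_ne_bot _

lemma toE_add (m n : ℕ∞) : toE (m + n) = toE m + toE n := by
  simp only [toE, ENat.toENNReal_add, EReal.coe_ennreal_add]

lemma toE_add_sub_toE_add {m n q : ℕ∞} (hq : q ≠ ⊤) :
    toE (m + q) - toE (n + q) = toE m - toE n := by
  lift q to ℕ using hq
  have hq : toE q = ((q : ℝ) : EReal) := by rw [toE]; norm_cast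
  rw [toE_add, toE_add, hq, EReal.add_sub_add_comm (.inr (EReal.coe_ne_top _))
    (.inr (EReal.coe_ne_bot _)), ← EReal.coe_sub, sub_self, EReal.coe_zero, add_zero]

lemma crv_eq_toE_sub (v : V) (x y z w : Set (Set V)) :
    crv G v x y z w =
      toE (grom G v x z + grom G v y w) - toE (grom G v x w + grom G v y z) := by
  rw [crv, toE_add, toE_add, sub_eq_add_neg, sub_eq_add_neg, sub_eq_add_neg,
    EReal.neg_add (.inl (toE_ne_bot _)) (.inr (toE_ne_bot _)), add_assoc, sub_eq_add_neg]

lemma crv_eq_toE_sepCount_sub {x y z w : Set (Set V)} (hx : IsUltra G x) (hy : IsUltra G y)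
    (hz : IsUltra G z) (hw : IsUltra G w) {v : V} (hA : inA G v x y z w) :
    crv G v x y z w = toE (sepCount x z y w) - toE (sepCount x w y z) := by
  set q := overlapCount (x \ {h | v ∈ h}) (y \ {h | v ∈ h}) (z \ {h | v ∈ h}) (w \ {h | v ∈ h})
  have hxz : grom G v x z + grom G v y w = sepCount x z y w + q :=
    grom_add_grom_eq_sepCount_add hx hy hz hw v
  have hxw : grom G v x w + grom G v y z = sepCount x w y z + q := by
    rw [grom_add_grom_eq_sepCount_add hx hy hw hz v, overlapCount_swap]
  have hq : q ≠ ⊤ := by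
    have hfin : grom G v x z + grom G v y w ≠ ⊤ ∨ grom G v x w + grom G v y z ≠ ⊤ := by
      rcases hA with ⟨-, h⟩ | ⟨-, h⟩ | ⟨h, -⟩
      exacts [.inl h, .inr h, .inl h]
    rw [hxz, hxw] at hfin
    rcases hfin with h | h <;> exact (WithTop.add_ne_top.1 h).2
  rw [crv_eq_toE_sub, hxz, hxw, toE_add_sub_toE_add hq]

lemma grom_mapUltra {V' : Type*} (G' : SimpleGraph V') (e : V ≃ V') (v : V')
    (x y : Set (Set V)) :
    grom G' v (mapUltra e x) (mapUltra e y) = grom G (e.symm v) x y := by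
  have hinj : Function.Injective (fun h : Set V => e '' h) := image_injective.2 e.injective
  rw [grom, grom, ← hinj.encard_image]
  congr 1
  ext k
  constructor
  · rintro ⟨⟨h, hhx, rfl⟩, hhy, hv⟩
    exact ⟨h, ⟨hhx, hinj.mem_set_image.1 hhy, fun hvh => hv (mem_image_equiv.2 hvh)⟩, rfl⟩
  · rintro ⟨h, ⟨hhx, hhy, hv⟩, rfl⟩
    exact ⟨⟨h, hhx, rfl⟩, ⟨h, hhy, rfl⟩, fun hvh => hv (mem_image_equiv.1 hvh)⟩

lemma crv_mapUltra {V' : Type*} (G' : SimpleGraph V') (e : V ≃ V') (v : V')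
    (x y z w : Set (Set V)) :
    crv G' v (mapUltra e x) (mapUltra e y) (mapUltra e z) (mapUltra e w) =
      crv G (e.symm v) x y z w := by
  simp only [crv, grom_mapUltra (G := G) G' e]

end CCCR

open CCCR
theorem stmt4_general {V : Type*} (G : SimpleGraph V)
    (x y z w : Set (Set V)) (hx : IsUltra G x) (hy : IsUltra G y)
    (hz : IsUltra G z) (hw : IsUltra G w) (hA : memA G x y z w) :
    (∀ v v' : V, crv G v x y z w = crv G v' x y z w) ∧
    ∀ (g : G ≃g G) (v : V),
      crv G v (mapUltra ⇑g x) (mapUltra ⇑g y) (mapUltra ⇑g z) (mapUltra ⇑g w) =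
        crv G v x y z w := by
  have hbase (v v' : V) : crv G v x y z w = crv G v' x y z w := by
    rw [crv_eq_toE_sepCount_sub hx hy hz hw (hA v), crv_eq_toE_sepCount_sub hx hy hz hw (hA v')]
  exact ⟨hbase, fun g v => (crv_mapUltra G g.toEquiv v x y z w).trans (hbase _ _)⟩

/-- Corollary `independent of basepoint 2`: the cross ratio is
independent of the basepoint, and it is preserved by every automorphism of `X`
acting on the Roller compactification. -/
theorem stmt4 {V : Type*} (G : SimpleGraph V) (hG : IsCCC G)
    (x y z w : Set (Set V)) (hx : IsUltra G x) (hy : IsUltra G y)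
    (hz : IsUltra G z) (hw : IsUltra G w) (hA : memA G x y z w) :
    (∀ v v' : V, crv G v x y z w = crv G v' x y z w) ∧
    ∀ (g : G ≃g G) (v : V),
      crv G v (mapUltra ⇑g x) (mapUltra ⇑g y) (mapUltra ⇑g z) (mapUltra ⇑g w) =
        crv G v x y z w :=
  stmt4_general G x y z w hx hy hz hw hA
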